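/- Let H be a real Hilbert space (a complete real inner product space) that is also an ordered vector space whose order is directed and whose positive cone H⁺ = {z ∈ H : 0 ≤ z} is closed in the norm topology (so that H⁺ is a Chebyshev set and the metric projection P = P_{H⁺} exists). Then the following are equivalent: (i) every pair {x, 0} in H has a supremum and the induced norm is a lattice norm (whenever s is the supremum of {x, -x}, t is the supremum of {y, -y}, and s ≤ t, then ‖x‖ ≤ ‖y‖); (ii) P is isotone (x ≤ y implies P(x) ≤ P(y)) and subadditive (P(x+y) ≤ P(x) + P(y) for all x, y). Moreover, in this case P(x) is the supremum of {x, 0} for every x ∈ H. -/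
import Mathlib

open RealInnerProductSpace

/-- `p` is a best approximation to `x` from the set `A`. -/
def IsBestApprox {H : Type*} [NormedAddCommGroup H] (A : Set H) (x p : H) : Prop :=
  p ∈ A ∧ ∀ y ∈ A, ‖x - p‖ ≤ ‖x - y‖

/-- Németh's theorem: for a real Hilbert space `H` which is a directed ordered vector
space with norm-closed positive cone (whose metric projection is `P`), `H` is a Hilbert
lattice iff `P` is isotone and subadditive; in this case `P x = sup {x, 0}`. -/
theorem stmt_14 {H : Type*} [NormedAddCommGroup H] [InnerProductSpace ℝ H]
    [CompleteSpace H] [PartialOrder H]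
    (hadd : ∀ x y z : H, x ≤ y → x + z ≤ y + z)
    (hsmul : ∀ (t : ℝ) (x : H), 0 ≤ t → 0 ≤ x → 0 ≤ t • x)
    (hdir : ∀ x y : H, ∃ z : H, x ≤ z ∧ y ≤ z)
    (hclosed : IsClosed {z : H | 0 ≤ z})
    (P : H → H)
    (hP : ∀ x : H, IsBestApprox {z : H | 0 ≤ z} x (P x))
    (hPuniq : ∀ x q : H, IsBestApprox {z : H | 0 ≤ z} x q → q = P x) :
    (((∀ x : H, ∃ s : H, IsLUB {x, 0} s) ∧
        (∀ x y s t : H, IsLUB {x, -x} s → IsLUB {y, -y} t → s ≤ t → ‖x‖ ≤ ‖y‖)) ↔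
      ((∀ x y : H, x ≤ y → P x ≤ P y) ∧ (∀ x y : H, P (x + y) ≤ P x + P y))) ∧
    ((∀ x y : H, x ≤ y → P x ≤ P y) → (∀ x y : H, P (x + y) ≤ P x + P y) →
      ∀ x : H, IsLUB {x, 0} (P x)) := by
  -- basic facts
  have hPmem : ∀ x : H, (0 : H) ≤ P x := fun x => (hP x).1
  have hPle : ∀ x y : H, (0 : H) ≤ y → ‖x - P x‖ ≤ ‖x - y‖ := fun x y hy => (hP x).2 y hy
  -- order arithmetic
  have hsub : ∀ x y : H, x ≤ y ↔ (0 : H) ≤ y - x := by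
    intro x y
    constructor
    · intro h
      have := hadd x y (-x) h
      simpa [sub_eq_add_neg] using this
    · intro h
      have := hadd 0 (y - x) x h
      simpa using this
  have haddle : ∀ a b c d : H, a ≤ b → c ≤ d → a + c ≤ b + d := by
    intro a b c d h1 h2
    calc a + c ≤ b + c := hadd _ _ _ h1
      _ = c + b := add_comm _ _
      _ ≤ d + b := hadd _ _ _ h2
      _ = b + d := add_comm _ _
  have hpos_add : ∀ a b : H, (0 : H) ≤ a → (0 : H) ≤ b → (0 : H) ≤ a + b := by
    intro a b ha hb
    have := haddle 0 a 0 b ha hb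
    simpa using this
  have hhalf : ∀ x : H, (0 : H) ≤ x + x → (0 : H) ≤ x := by
    intro x h
    have h2 := hsmul (1 / 2) (x + x) (by norm_num) h
    have e : (1 / 2 : ℝ) • (x + x) = x := by module
    rwa [e] at h2
  -- P fixes the cone
  have hPfix : ∀ k : H, (0 : H) ≤ k → P k = k := by
    intro k hk
    refine (hPuniq k k ⟨hk, ?_⟩).symm
    intro y _
    simp
  have hP0 : P 0 = 0 := hPfix 0 le_rfl
  -- convexity of the cone
  have hconv : Convex ℝ {z : H | 0 ≤ z} := by
    intro a ha b hb s t hs ht _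
    exact hpos_add _ _ (hsmul s a hs ha) (hsmul t b ht hb)
  -- variational characterization of the projection
  have hvar : ∀ x k : H, (0 : H) ≤ k → ⟪x - P x, k - P x⟫ ≤ 0 := by
    intro x k hk
    have hiInf : ‖x - P x‖ = ⨅ w : {z : H | 0 ≤ z}, ‖x - w‖ := by
      haveI : Nonempty {z : H | 0 ≤ z} := ⟨⟨0, le_rfl⟩⟩
      refine le_antisymm (le_ciInf fun w => hPle x w w.2) ?_
      have hbdd : BddBelow (Set.range fun w : {z : H | 0 ≤ z} => ‖x - w‖) := by
        refine ⟨0, ?_⟩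
        rintro r ⟨w, rfl⟩
        exact norm_nonneg _
      exact ciInf_le hbdd ⟨P x, hPmem x⟩
    exact (norm_eq_iInf_iff_real_inner_le_zero hconv (hPmem x)).1 hiInf k hk
  have hortho : ∀ x : H, ⟪x - P x, P x⟫ = 0 := by
    intro x
    have h0 : ⟪x - P x, 0 - P x⟫ ≤ 0 := hvar x 0 le_rfl
    have h2 : ⟪x - P x, (2 : ℝ) • P x - P x⟫ ≤ 0 :=
      hvar x ((2 : ℝ) • P x) (hsmul 2 _ (by norm_num) (hPmem x))
    have e0 : ⟪x - P x, 0 - P x⟫ = -⟪x - P x, P x⟫ := by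
      rw [zero_sub, inner_neg_right]
    have e2 : ((2 : ℝ) • P x - P x) = P x := by module
    rw [e0] at h0
    rw [e2] at h2
    linarith
  have hpolar : ∀ x k : H, (0 : H) ≤ k → ⟪x - P x, k⟫ ≤ 0 := by
    intro x k hk
    have h := hvar x k hk
    have e : ⟪x - P x, k - P x⟫ = ⟪x - P x, k⟫ - ⟪x - P x, P x⟫ := inner_sub_right _ _ _
    rw [e, hortho x] at h
    linarith
  -- P of an element of the polar cone is 0
  have hPzero : ∀ q : H, (∀ k : H, (0 : H) ≤ k → ⟪q, k⟫ ≤ 0) → P q = 0 := by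
    intro q hq
    refine (hPuniq q 0 ⟨le_rfl, ?_⟩).symm
    intro y hy
    have hy' : (0 : H) ≤ y := hy
    have e : ‖q - y‖ ^ 2 = ‖q‖ ^ 2 - 2 * ⟪q, y⟫ + ‖y‖ ^ 2 := norm_sub_sq_real q y
    have hip := hq y hy'
    have h2 : ‖q - 0‖ ^ 2 ≤ ‖q - y‖ ^ 2 := by
      rw [sub_zero, e]; nlinarith [sq_nonneg ‖y‖]
    nlinarith [norm_nonneg (q - 0), norm_nonneg (q - y)]
  -- the core development under isotonicity and subadditivity
  have core : (∀ x y : H, x ≤ y → P x ≤ P y) → (∀ x y : H, P (x + y) ≤ P x + P y) →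
      (∀ x : H, IsLUB {x, 0} (P x)) ∧
      (∀ x y s t : H, IsLUB {x, -x} s → IsLUB {y, -y} t → s ≤ t → ‖x‖ ≤ ‖y‖) := by
    intro hiso hsubadd
    -- subduality of the cone
    have hsubdual : ∀ a b : H, (0 : H) ≤ a → (0 : H) ≤ b → 0 ≤ ⟪a, b⟫ := by
      intro a b ha hb
      have hb' : -b ≤ 0 := by
        rw [hsub]; simpa using hb
      have h1 : P (-b) ≤ 0 := by
        have := hiso (-b) 0 hb'
        rwa [hP0] at this
      have h2 : P (-b) = 0 := le_antisymm h1 (hPmem _)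
      have h3 : ⟪-b - P (-b), a⟫ ≤ 0 := hpolar (-b) a ha
      rw [h2, sub_zero, inner_neg_left] at h3
      rw [real_inner_comm]
      linarith
    -- x ≤ P x
    have hxle : ∀ x : H, x ≤ P x := by
      intro x
      set q := x - P x with hqdef
      have hPq : P q = 0 := hPzero q (fun k hk => hpolar x k hk)
      obtain ⟨z, hz1, hz2⟩ := hdir q 0
      have hb : (0 : H) ≤ z - q := by rwa [← hsub]
      have hzq : q + (z - q) = z := by abel
      have h1 : P (q + (z - q)) ≤ P q + P (z - q) := hsubadd q (z - q)
      rw [hzq, hPq, hPfix (z - q) hb, zero_add, hPfix z hz2] at h1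
      rw [hsub] at h1 ⊢
      have e : z - q - z = P x - x := by rw [hqdef]; abel
      rwa [e] at h1
    -- P x is the supremum of {x, 0}
    have hlub : ∀ x : H, IsLUB {x, 0} (P x) := by
      intro x
      constructor
      · intro w hw
        rcases hw with rfl | hw
        · exact hxle w
        · rw [Set.mem_singleton_iff] at hw
          rw [hw]; exact hPmem x
      · intro w hw
        have hw0 : (0 : H) ≤ w := hw (Set.mem_insert_of_mem _ rfl)
        have hwx : x ≤ w := hw (Set.mem_insert _ _)
        have := hiso x w hwx
        rwa [hPfix w hw0] at this
    refine ⟨hlub, ?_⟩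
    -- P (-x) = P x - x
    have hPneg : ∀ x : H, P (-x) = P x - x := by
      intro x
      refine (hPuniq (-x) (P x - x) ⟨by rw [Set.mem_setOf_eq, ← hsub]; exact hxle x, ?_⟩).symm
      intro y hy
      have hy' : (0 : H) ≤ y := hy
      have e1 : -x - (P x - x) = -(P x) := by abel
      have e2 : -x - y = -(x + y) := by abel
      rw [e1, e2, norm_neg, norm_neg]
      have expand : ‖x + y‖ ^ 2 = ‖P x‖ ^ 2 + 2 * ⟪P x, x + y - P x⟫ + ‖x + y - P x‖ ^ 2 := by
        have e3 : x + y = P x + (x + y - P x) := by abel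
        conv_lhs => rw [e3]
        rw [norm_add_sq_real]
      have hin1 : (⟪P x, x + y - P x⟫ : ℝ) = ⟪P x, y⟫ + ⟪x - P x, P x⟫ := by
        have e4 : x + y - P x = y + (x - P x) := by abel
        rw [e4, inner_add_right, real_inner_comm (P x) (x - P x)]
      have h2 : 0 ≤ ⟪P x, y⟫ := hsubdual (P x) y (hPmem x) hy'
      have h3 : ‖P x‖ ^ 2 ≤ ‖x + y‖ ^ 2 := by
        rw [expand, hin1, hortho x]
        nlinarith [sq_nonneg ‖x + y - P x‖]
      nlinarith [norm_nonneg (P x), norm_nonneg (x + y)]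
    -- orthogonality of P x and P (-x)
    have horthoneg : ∀ x : H, ⟪P x, P (-x)⟫ = 0 := by
      intro x
      rw [hPneg x]
      have e : (P x - x) = -(x - P x) := by abel
      rw [e, inner_neg_right, real_inner_comm, hortho x]
      ring
    -- ‖x‖ = ‖P x + P (-x)‖
    have hnorm : ∀ x : H, ‖x‖ = ‖P x + P (-x)‖ := by
      intro x
      have ex : x = P x - P (-x) := by rw [hPneg x]; abel
      have h1 : ‖P x - P (-x)‖ ^ 2 = ‖P x + P (-x)‖ ^ 2 := by
        rw [norm_sub_sq_real, norm_add_sq_real, horthoneg x]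
        ring
      have h2 : ‖x‖ ^ 2 = ‖P x + P (-x)‖ ^ 2 := by
        conv_lhs => rw [ex]
        exact h1
      nlinarith [norm_nonneg x, norm_nonneg (P x + P (-x))]
    -- IsLUB {x, -x} (P x + P (-x))
    have hlubabs : ∀ x : H, IsLUB {x, -x} (P x + P (-x)) := by
      intro x
      constructor
      · intro w hw
        rcases hw with rfl | hw
        · rw [hsub]
          have e : P w + P (-w) - w = P (-w) + (P w - w) := by abel
          rw [e]
          exact hpos_add _ _ (hPmem _) (by rw [← hsub]; exact hxle w)
        · rw [Set.mem_singleton_iff] at hw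
          rw [hw, hsub]
          have e : P x + P (-x) - -x = P x + (P (-x) - -x) := by abel
          rw [e]
          exact hpos_add _ _ (hPmem _) (by rw [← hsub]; exact hxle (-x))
      · intro w hw
        have hwx : x ≤ w := hw (Set.mem_insert _ _)
        have hwnx : -x ≤ w := hw (Set.mem_insert_of_mem _ rfl)
        set m := (1 / 2 : ℝ) • (w + x) with hm
        have hwx0 : (0 : H) ≤ w + x := by
          rw [hsub] at hwnx
          have e : w - -x = w + x := by abel
          rwa [e] at hwnx
        have hm0 : (0 : H) ≤ m := hsmul _ _ (by norm_num) hwx0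
        have hxm : x ≤ m := by
          rw [hsub]
          have e : m - x = (1 / 2 : ℝ) • (w - x) := by rw [hm]; module
          rw [e]
          exact hsmul _ _ (by norm_num) (by rw [← hsub]; exact hwx)
        have hPxm : P x ≤ m := by
          have := hiso x m hxm
          rwa [hPfix m hm0] at this
        -- conclude P x + P (-x) ≤ w
        rw [hsub]
        have h2 : P x + P x ≤ m + m := haddle _ _ _ _ hPxm hPxm
        have e : m + m = w + x := by rw [hm]; module
        rw [e] at h2
        rw [hsub] at h2
        have e2 : w - (P x + P (-x)) = w + x - (P x + P x) := by
          rw [hPneg x]; abel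
        rwa [e2]
    -- comparison of norms on the cone
    have hnormmono : ∀ u v : H, (0 : H) ≤ u → u ≤ v → ‖u‖ ≤ ‖v‖ := by
      intro u v hu huv
      have hv : (0 : H) ≤ v := le_trans hu huv
      have h1 : 0 ≤ ⟪v - u, v + u⟫ :=
        hsubdual _ _ (by rw [← hsub]; exact huv) (hpos_add _ _ hv hu)
      have e : ⟪v - u, v + u⟫ = ‖v‖ ^ 2 - ‖u‖ ^ 2 := by
        rw [inner_sub_left, inner_add_right, inner_add_right,
          real_inner_self_eq_norm_sq, real_inner_self_eq_norm_sq, real_inner_comm u v]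
        ring
      rw [e] at h1
      nlinarith [norm_nonneg u, norm_nonneg v]
    -- the lattice-norm property
    intro x y s t hs ht hst
    have hsx : s = P x + P (-x) := hs.unique (hlubabs x)
    have hty : t = P y + P (-y) := ht.unique (hlubabs y)
    have hs0 : (0 : H) ≤ s := by rw [hsx]; exact hpos_add _ _ (hPmem _) (hPmem _)
    rw [hnorm x, hnorm y, ← hsx, ← hty]
    exact hnormmono s t hs0 hst
  constructor
  · constructor
    · -- lattice ⇒ P isotone and subadditive
      rintro ⟨hA, hB⟩
      -- existence of |w|
      have habs : ∀ w : H, ∃ t : H, IsLUB {w, -w} t := by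
        intro w
        obtain ⟨v, hv⟩ := hA (w + w)
        have hv1 : w + w ≤ v := hv.1 (Set.mem_insert _ _)
        have hv0 : (0 : H) ≤ v := hv.1 (Set.mem_insert_of_mem _ rfl)
        refine ⟨v - w, ⟨?_, ?_⟩⟩
        · intro u hu
          rcases hu with rfl | hu
          · rw [hsub]
            have e : v - u - u = v - (u + u) := by abel
            rw [e, ← hsub]
            exact hv1
          · rw [Set.mem_singleton_iff] at hu
            rw [hu, hsub]
            have e : v - w - -w = v := by abel
            rw [e]
            exact hv0
        · intro b hb
          have hb1 : w ≤ b := hb (Set.mem_insert _ _)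
          have hb2 : -w ≤ b := hb (Set.mem_insert_of_mem _ rfl)
          have h1 : v ≤ b + w := by
            refine hv.2 ?_
            intro u hu
            rcases hu with rfl | hu
            · exact haddle _ _ _ _ hb1 le_rfl
            · rw [Set.mem_singleton_iff] at hu
              rw [hu, hsub]
              have e : b + w - 0 = b - -w := by abel
              rw [e, ← hsub]
              exact hb2
          rw [hsub] at h1 ⊢
          have e : b - (v - w) = b + w - v := by abel
          rwa [e]
      -- any supremum of {x, 0} is a best approximation, hence equals P x
      have hPeq : ∀ x s : H, IsLUB {x, 0} s → s = P x := by
        intro x s hlubs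
        have hsx : x ≤ s := hlubs.1 (Set.mem_insert _ _)
        have hs0 : (0 : H) ≤ s := hlubs.1 (Set.mem_insert_of_mem _ rfl)
        refine hPuniq x s ⟨hs0, ?_⟩
        intro k hk
        have hk' : (0 : H) ≤ k := hk
        obtain ⟨t, hlubt⟩ := habs (x - k)
        have ht1 : x - k ≤ t := hlubt.1 (Set.mem_insert _ _)
        have ht2 : -(x - k) ≤ t := hlubt.1 (Set.mem_insert_of_mem _ rfl)
        have ht0 : (0 : H) ≤ t := by
          apply hhalf
          have := haddle _ _ _ _ ht1 ht2
          have e : x - k + -(x - k) = 0 := by abel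
          rwa [e] at this
        -- s - x ≤ t
        have hst : s - x ≤ t := by
          have htx : x ≤ t + x := by
            rw [hsub]
            have e : t + x - x = t := by abel
            rwa [e]
          have ht0' : (0 : H) ≤ t + x := by
            have hkt : k ≤ t + x := by
              rw [hsub]
              have e : t + x - k = t - (-(x - k)) := by abel
              rw [e, ← hsub]
              exact ht2
            exact le_trans hk' hkt
          have hstx : s ≤ t + x := by
            refine hlubs.2 ?_
            intro u hu
            rcases hu with rfl | hu
            · exact htx
            · rw [Set.mem_singleton_iff] at hu
              rw [hu]; exact ht0'
          rw [hsub] at hstx ⊢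
          have e : t - (s - x) = t + x - s := by abel
          rwa [e]
        -- IsLUB {x - s, -(x - s)} (s - x)
        have hlubxs : IsLUB {x - s, -(x - s)} (s - x) := by
          have hsx' : (0 : H) ≤ s - x := by rw [← hsub]; exact hsx
          constructor
          · intro u hu
            rcases hu with rfl | hu
            · rw [hsub]
              have e : s - x - (x - s) = (s - x) + (s - x) := by abel
              rw [e]
              exact hpos_add _ _ hsx' hsx'
            · rw [Set.mem_singleton_iff] at hu
              rw [hu, neg_sub]
          · intro b hb
            have := hb (Set.mem_insert_of_mem _ rfl)
            rwa [neg_sub] at this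
        have := hB (x - s) (x - k) (s - x) t hlubxs hlubt hst
        exact this
      constructor
      · -- isotone
        intro x y hxy
        obtain ⟨sx, hsx⟩ := hA x
        obtain ⟨sy, hsy⟩ := hA y
        rw [← hPeq x sx hsx, ← hPeq y sy hsy]
        refine hsx.2 ?_
        intro u hu
        rcases hu with rfl | hu
        · exact le_trans hxy (hsy.1 (Set.mem_insert _ _))
        · rw [Set.mem_singleton_iff] at hu
          rw [hu]
          exact hsy.1 (Set.mem_insert_of_mem _ rfl)
      · -- subadditive
        intro x y
        obtain ⟨sx, hsx⟩ := hA x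
        obtain ⟨sy, hsy⟩ := hA y
        obtain ⟨sxy, hsxy⟩ := hA (x + y)
        rw [← hPeq x sx hsx, ← hPeq y sy hsy, ← hPeq (x + y) sxy hsxy]
        refine hsxy.2 ?_
        intro u hu
        have h1 : x ≤ sx := hsx.1 (Set.mem_insert _ _)
        have h2 : y ≤ sy := hsy.1 (Set.mem_insert _ _)
        have h3 : (0 : H) ≤ sx := hsx.1 (Set.mem_insert_of_mem _ rfl)
        have h4 : (0 : H) ≤ sy := hsy.1 (Set.mem_insert_of_mem _ rfl)
        rcases hu with rfl | hu
        · exact haddle _ _ _ _ h1 h2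
        · rw [Set.mem_singleton_iff] at hu
          rw [hu]
          exact hpos_add _ _ h3 h4
    · -- P isotone and subadditive ⇒ lattice
      rintro ⟨hiso, hsubadd⟩
      obtain ⟨h1, h2⟩ := core hiso hsubadd
      exact ⟨fun x => ⟨P x, h1 x⟩, h2⟩
  · intro hiso hsubadd
    exact (core hiso hsubadd).1
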